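/- In the one-variable jet setting with λ = λ(u_0, …, u_n), define R_{kl} = Σ_{i,r} C(i,r)·D^{i−r}(Λ_{k−r})·∂_{u_i}(Λ_l) where Λ_0 = ½Dλ, Λ_1 = λ. Then R_{k0} = ½(D R_{k1} + R_{k−1,1}) for all k = 0, …, n+2, where R_{k1} = ½·Σ_i (C(i,k) + 2C(i,k−1))·D^{i+1−k}(λ)·∂_{u_i}(λ). -/

import Mathlib

noncomputable section

/-- A point of the (one-dimensional) jet space: `x` together with jet variables `u_0, u_1, …`. -/
abbrev Jet := ℝ × (ℕ → ℝ)

/-- Partial derivative with respect to the jet variable `u_i`. -/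
def pd (i : ℕ) (f : Jet → ℝ) : Jet → ℝ :=
  fun p => deriv (fun t => f (p.1, Function.update p.2 i t)) (p.2 i)

/-- Partial derivative with respect to `x`. -/
def pdx (f : Jet → ℝ) : Jet → ℝ :=
  fun p => deriv (fun t => f (t, p.2)) p.1

/-- The total derivative `D = ∂_x + Σ_i u_{i+1} ∂_{u_i}`. -/
def TotalD (f : Jet → ℝ) : Jet → ℝ :=
  fun p => pdx f p + ∑' i : ℕ, p.2 (i + 1) * pd i f p

/-- `f` belongs to the algebra `F = C^∞_fin`: it is a smooth function of
`x, u_0, …, u_N` for some finite `N`. -/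
def SmoothFin (f : Jet → ℝ) : Prop :=
  ∃ (N : ℕ) (g : ℝ × (Fin (N + 1) → ℝ) → ℝ), ContDiff ℝ (⊤ : ℕ∞) g ∧
    ∀ p : Jet, f p = g (p.1, fun i => p.2 i)


/-- `f` depends only on the jet variables `u_0, …, u_n` (and not on `x`). -/
def DependsOnJets (n : ℕ) (f : Jet → ℝ) : Prop :=
  ∀ p q : Jet, (∀ i ≤ n, p.2 i = q.2 i) → f p = f q

/-- The coefficients of the operator `Λ(D) = λ·D + ½·D∘λ`:
`Λ_0 = ½ Dλ`, `Λ_1 = λ`, `Λ_j = 0` for `j ≥ 2`. -/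
def Lam (lam : Jet → ℝ) : ℕ → Jet → ℝ
  | 0 => fun p => (1 / 2) * TotalD lam p
  | 1 => lam
  | _ + 2 => 0

/-- `R_{kl} = Σ_{i,r} C(i,r)·D^{i−r}(Λ_{k−r})·∂_{u_i}(Λ_l)`, where `λ` depends only on
`u_0, …, u_n` (so all terms with `i ≥ n + 2` vanish and the sum below is complete). -/
def Rcoef (n : ℕ) (lam : Jet → ℝ) (k l : ℕ) : Jet → ℝ :=
  fun p => ∑ i ∈ Finset.range (n + 2), ∑ r ∈ Finset.range (i + 1),
    if r ≤ k then
      (Nat.choose i r : ℝ) * (TotalD^[i - r] (Lam lam (k - r)) p) * pd i (Lam lam l) p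
    else 0

namespace Rk0


abbrev EN (N : ℕ) := ℝ × (Fin (N+1) → ℝ)

def proj (N : ℕ) (p : Jet) : EN N := (p.1, fun i => p.2 i)

/-- coordinate direction for jet variable `j` -/
def euF {N : ℕ} (j : Fin (N+1)) : EN N := (0, Pi.single j 1)

def Rep (N : ℕ) (f : Jet → ℝ) : Prop :=
  ∃ g : EN N → ℝ, ContDiff ℝ (⊤:ℕ∞) g ∧ ∀ p, f p = g (proj N p)

lemma proj_update {N : ℕ} (j : Fin (N+1)) (p : Jet) (t : ℝ) :
    proj N (p.1, Function.update p.2 j.1 t) = proj N p + (t - p.2 j.1) • euF j := by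
  unfold proj euF
  refine Prod.ext (by simp) ?_
  funext m
  simp only [Prod.snd_add, Prod.snd, Pi.add_apply, Prod.smul_snd, Pi.smul_apply,
    Function.update_apply, Pi.single_apply, smul_eq_mul]
  by_cases h : m = j
  · subst h; simp
  · have : (m.1 : ℕ) ≠ j.1 := fun hv => h (Fin.ext hv)
    simp [this, h]

lemma proj_update_of_gt {N i : ℕ} (hi : N < i) (p : Jet) (t : ℝ) :
    proj N (p.1, Function.update p.2 i t) = proj N p := by
  unfold proj
  refine Prod.ext rfl ?_
  funext m
  have : (m.1 : ℕ) ≠ i := by omega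
  simp [Function.update_apply, this]

lemma hasDerivAt_line {g : EN N → ℝ} (hg : ContDiff ℝ (⊤:ℕ∞) g) (q0 v : EN N) (t0 : ℝ) :
    HasDerivAt (fun t => g (q0 + (t - t0) • v)) (fderiv ℝ g q0 v) t0 := by
  have h1 : HasDerivAt (fun t : ℝ => q0 + (t - t0) • v) v t0 := by
    simpa using (((hasDerivAt_id t0).sub_const t0).smul_const v).const_add q0
  have h2 : HasFDerivAt g (fderiv ℝ g q0) ((fun t : ℝ => q0 + (t - t0) • v) t0) := by
    simpa using (hg.differentiable (by simp) q0).hasFDerivAt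
  exact h2.comp_hasDerivAt t0 h1

lemma pd_eq {N : ℕ} {g : EN N → ℝ} (hg : ContDiff ℝ (⊤:ℕ∞) g) {f : Jet → ℝ}
    (hf : ∀ p, f p = g (proj N p)) (j : Fin (N+1)) (p : Jet) :
    pd j.1 f p = fderiv ℝ g (proj N p) (euF j) := by
  unfold pd
  have h : (fun t => f (p.1, Function.update p.2 j.1 t))
      = fun t => g (proj N p + (t - p.2 j.1) • euF j) := by
    funext t; rw [hf, proj_update]
  rw [h]
  exact (hasDerivAt_line hg (proj N p) (euF j) (p.2 j.1)).deriv

lemma pd_zero_of_gt {N : ℕ} {g : EN N → ℝ} {f : Jet → ℝ}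
    (hf : ∀ p, f p = g (proj N p)) {i : ℕ} (hi : N < i) :
    pd i f = fun _ => 0 := by
  funext p
  unfold pd
  have h : (fun t => f (p.1, Function.update p.2 i t)) = fun _ => g (proj N p) := by
    funext t; rw [hf, proj_update_of_gt hi]
  rw [h]; exact deriv_const _ _

lemma pdx_eq {N : ℕ} {g : EN N → ℝ} (hg : ContDiff ℝ (⊤:ℕ∞) g) {f : Jet → ℝ}
    (hf : ∀ p, f p = g (proj N p)) (p : Jet) :
    pdx f p = fderiv ℝ g (proj N p) (1, 0) := by
  unfold pdx
  have h : (fun t => f (t, p.2)) = fun t => g (proj N p + (t - p.1) • ((1:ℝ), (0 : Fin (N+1) → ℝ))) := by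
    funext t; rw [hf]
    congr 1
    refine Prod.ext (by simp [proj]) ?_
    funext m; simp [proj]
  rw [h]
  exact (hasDerivAt_line hg (proj N p) _ p.1).deriv

lemma totalD_eq {N : ℕ} {g : EN N → ℝ} (hg : ContDiff ℝ (⊤:ℕ∞) g) {f : Jet → ℝ}
    (hf : ∀ p, f p = g (proj N p)) (p : Jet) :
    TotalD f p = fderiv ℝ g (proj N p) (1, fun j => p.2 (j.1 + 1)) := by
  unfold TotalD
  rw [pdx_eq hg hf p,
    tsum_eq_sum (s := Finset.range (N+1)) (f := fun i => p.2 (i+1) * pd i f p)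
      (fun i hi => by
        show p.2 (i+1) * pd i f p = 0
        simp [pd_zero_of_gt hf (show N < i by simpa using hi)]),
    Finset.sum_range (f := fun i => p.2 (i+1) * pd i f p)]
  have h1 : ∀ j : Fin (N+1), p.2 (j.1+1) * pd j.1 f p
      = p.2 (j.1+1) * fderiv ℝ g (proj N p) (euF j) := fun j => by rw [pd_eq hg hf j p]
  rw [Finset.sum_congr rfl (fun j _ => h1 j)]
  have h2 : ((1:ℝ), fun j : Fin (N+1) => p.2 (j.1 + 1))
      = ((1:ℝ), (0 : Fin (N+1) → ℝ)) + ∑ j : Fin (N+1), p.2 (j.1+1) • euF j := by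
    have hfst : (∑ j : Fin (N+1), p.2 (j.1+1) • euF j).1 = 0 := by
      rw [Prod.fst_sum]; simp [euF]
    have hsnd : (∑ j : Fin (N+1), p.2 (j.1+1) • euF j).2 = fun j => p.2 (j.1 + 1) := by
      rw [Prod.snd_sum]
      funext m
      rw [Finset.sum_apply]
      simp only [euF, Prod.smul_snd, Pi.smul_apply, Pi.single_apply, smul_eq_mul,
        mul_ite, mul_one, mul_zero]
      rw [Finset.sum_ite_eq Finset.univ m (fun j => p.2 (j.1+1))]
      simp
    refine Prod.ext ?_ ?_
    · rw [Prod.fst_add, hfst]; simp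
    · rw [Prod.snd_add, hsnd]; simp
  rw [h2, map_add, map_sum]
  simp [smul_eq_mul]


lemma rep_zero {N : ℕ} : Rep N (fun _ => (0:ℝ)) :=
  ⟨fun _ => 0, contDiff_const, fun _ => rfl⟩

lemma Rep.mono {N M : ℕ} {f : Jet → ℝ} (h : N ≤ M) (hf : Rep N f) : Rep M f := by
  obtain ⟨g, hg, hfe⟩ := hf
  have hNM : N + 1 ≤ M + 1 := by omega
  refine ⟨fun q => g (q.1, fun j => q.2 (Fin.castLE hNM j)), ?_, ?_⟩
  · refine hg.comp (contDiff_fst.prodMk (contDiff_pi.2 fun j => ?_))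
    exact (ContinuousLinearMap.proj (R := ℝ) (φ := fun _ : Fin (M+1) => ℝ)
      (Fin.castLE hNM j)).contDiff.comp contDiff_snd
  · intro p; rw [hfe]; rfl

lemma Rep.add {N : ℕ} {f₁ f₂ : Jet → ℝ} (h₁ : Rep N f₁) (h₂ : Rep N f₂) :
    Rep N (fun p => f₁ p + f₂ p) := by
  obtain ⟨g₁, hg₁, he₁⟩ := h₁; obtain ⟨g₂, hg₂, he₂⟩ := h₂
  exact ⟨fun q => g₁ q + g₂ q, hg₁.add hg₂, fun p => by show f₁ p + f₂ p = _; rw [he₁, he₂]⟩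

lemma Rep.mul {N : ℕ} {f₁ f₂ : Jet → ℝ} (h₁ : Rep N f₁) (h₂ : Rep N f₂) :
    Rep N (fun p => f₁ p * f₂ p) := by
  obtain ⟨g₁, hg₁, he₁⟩ := h₁; obtain ⟨g₂, hg₂, he₂⟩ := h₂
  exact ⟨fun q => g₁ q * g₂ q, hg₁.mul hg₂, fun p => by show f₁ p * f₂ p = _; rw [he₁, he₂]⟩

lemma Rep.const_mul {N : ℕ} {f : Jet → ℝ} (c : ℝ) (h : Rep N f) :
    Rep N (fun p => c * f p) := by
  obtain ⟨g, hg, he⟩ := h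
  exact ⟨fun q => c * g q, contDiff_const.mul hg, fun p => by show c * f p = _; rw [he]⟩

/-- The restriction map `E (N+1) → E N` forgetting the top jet variable. -/
def Amap (N : ℕ) : EN (N+1) →L[ℝ] EN N :=
  (ContinuousLinearMap.fst ℝ ℝ _).prod (ContinuousLinearMap.pi fun j =>
    (ContinuousLinearMap.proj (R := ℝ) (φ := fun _ : Fin (N+2) => ℝ) (Fin.castSucc j)).comp
      (ContinuousLinearMap.snd ℝ ℝ _))

/-- The shift map producing the "velocity" vector `(0, (u_1, …, u_{N+1}))`. -/
def Bmap (N : ℕ) : EN (N+1) →L[ℝ] EN N :=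
  (0 : EN (N+1) →L[ℝ] ℝ).prod (ContinuousLinearMap.pi fun j =>
    (ContinuousLinearMap.proj (R := ℝ) (φ := fun _ : Fin (N+2) => ℝ) (Fin.succ j)).comp
      (ContinuousLinearMap.snd ℝ ℝ _))

lemma Amap_apply (N : ℕ) (q : EN (N+1)) :
    Amap N q = (q.1, fun j : Fin (N+1) => q.2 (Fin.castSucc j)) := rfl

lemma Bmap_apply (N : ℕ) (q : EN (N+1)) :
    Bmap N q = (0, fun j : Fin (N+1) => q.2 (Fin.succ j)) := rfl

/-- The representative of `TotalD f` one level up. -/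
def Gfun {N : ℕ} (g : EN N → ℝ) : EN (N+1) → ℝ :=
  fun q => fderiv ℝ g (Amap N q) (((1:ℝ), (0 : Fin (N+1) → ℝ)) + Bmap N q)

lemma Gfun_smooth {N : ℕ} {g : EN N → ℝ} (hg : ContDiff ℝ (⊤:ℕ∞) g) :
    ContDiff ℝ (⊤:ℕ∞) (Gfun g) :=
  ContDiff.clm_apply ((hg.fderiv_right (by exact_mod_cast le_top)).comp (Amap N).contDiff)
    (contDiff_const.add (Bmap N).contDiff)

lemma Amap_proj {N : ℕ} (p : Jet) : Amap N (proj (N+1) p) = proj N p := rfl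

lemma Bmap_proj {N : ℕ} (p : Jet) :
    ((1:ℝ), (0 : Fin (N+1) → ℝ)) + Bmap N (proj (N+1) p)
      = ((1:ℝ), fun j : Fin (N+1) => p.2 (j.1 + 1)) := by
  rw [Bmap_apply]
  refine Prod.ext (by simp) ?_
  funext m
  simp only [Prod.snd_add, Pi.add_apply]
  show 0 + p.2 (m.1+1) = p.2 (m.1+1)
  rw [zero_add]

lemma Gfun_rep {N : ℕ} {g : EN N → ℝ} (hg : ContDiff ℝ (⊤:ℕ∞) g) {f : Jet → ℝ}
    (hf : ∀ p, f p = g (proj N p)) (p : Jet) :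
    TotalD f p = Gfun g (proj (N+1) p) := by
  rw [totalD_eq hg hf p]
  unfold Gfun
  rw [Amap_proj, Bmap_proj]

lemma Rep.totalD {N : ℕ} {f : Jet → ℝ} (h : Rep N f) : Rep (N+1) (TotalD f) := by
  obtain ⟨g, hg, he⟩ := h
  exact ⟨Gfun g, Gfun_smooth hg, Gfun_rep hg he⟩


lemma totalD_zero (p : Jet) : TotalD (fun _ => (0:ℝ)) p = 0 := by
  unfold TotalD pdx pd
  simp

lemma pd_const_mul (c : ℝ) (f : Jet → ℝ) (i : ℕ) (p : Jet) :
    pd i (fun q => c * f q) p = c * pd i f p := by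
  unfold pd
  exact deriv_const_mul_field c

lemma pdx_const_mul (c : ℝ) (f : Jet → ℝ) (p : Jet) :
    pdx (fun q => c * f q) p = c * pdx f p := by
  unfold pdx
  exact deriv_const_mul_field c

lemma totalD_const_mul (c : ℝ) (f : Jet → ℝ) (p : Jet) :
    TotalD (fun q => c * f q) p = c * TotalD f p := by
  unfold TotalD
  rw [pdx_const_mul]
  rw [show (fun i => p.2 (i+1) * pd i (fun q => c * f q) p)
      = fun i => c * (p.2 (i+1) * pd i f p) from funext fun i => by
    rw [pd_const_mul]; ring]
  rw [tsum_mul_left]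
  ring

lemma totalD_add {N : ℕ} {f₁ f₂ : Jet → ℝ} (h₁ : Rep N f₁) (h₂ : Rep N f₂) (p : Jet) :
    TotalD (fun q => f₁ q + f₂ q) p = TotalD f₁ p + TotalD f₂ p := by
  obtain ⟨g₁, hg₁, he₁⟩ := h₁; obtain ⟨g₂, hg₂, he₂⟩ := h₂
  have hd₁ : DifferentiableAt ℝ g₁ (proj N p) :=
    (hg₁.differentiable (by simp)).differentiableAt
  have hd₂ : DifferentiableAt ℝ g₂ (proj N p) :=
    (hg₂.differentiable (by simp)).differentiableAt
  rw [totalD_eq (hg₁.add hg₂) (f := fun q => f₁ q + f₂ q)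
      (fun p => by show f₁ p + f₂ p = _; rw [he₁, he₂]) p,
    totalD_eq hg₁ he₁ p, totalD_eq hg₂ he₂ p, fderiv_fun_add hd₁ hd₂]
  simp

lemma totalD_mul {N : ℕ} {f₁ f₂ : Jet → ℝ} (h₁ : Rep N f₁) (h₂ : Rep N f₂) (p : Jet) :
    TotalD (fun q => f₁ q * f₂ q) p = TotalD f₁ p * f₂ p + f₁ p * TotalD f₂ p := by
  obtain ⟨g₁, hg₁, he₁⟩ := h₁; obtain ⟨g₂, hg₂, he₂⟩ := h₂
  have hd₁ : DifferentiableAt ℝ g₁ (proj N p) :=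
    (hg₁.differentiable (by simp)).differentiableAt
  have hd₂ : DifferentiableAt ℝ g₂ (proj N p) :=
    (hg₂.differentiable (by simp)).differentiableAt
  rw [totalD_eq (hg₁.mul hg₂) (f := fun q => f₁ q * f₂ q)
      (fun p => by show f₁ p * f₂ p = _; rw [he₁, he₂]) p,
    totalD_eq hg₁ he₁ p, totalD_eq hg₂ he₂ p, fderiv_fun_mul hd₁ hd₂, he₁, he₂]
  simp
  ring

lemma Rep.sum {N : ℕ} {ι : Type*} {s : Finset ι} {F : ι → Jet → ℝ}
    (h : ∀ i ∈ s, Rep N (F i)) : Rep N (fun p => ∑ i ∈ s, F i p) := by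
  classical
  induction s using Finset.induction_on with
  | empty => simpa using rep_zero
  | @insert a s ha ih =>
    simp only [Finset.sum_insert ha]
    exact (h a (Finset.mem_insert_self a s)).add
      (ih fun i hi => h i (Finset.mem_insert_of_mem hi))

lemma totalD_sum {N : ℕ} {ι : Type*} {s : Finset ι} {F : ι → Jet → ℝ}
    (h : ∀ i ∈ s, Rep N (F i)) (p : Jet) :
    TotalD (fun q => ∑ i ∈ s, F i q) p = ∑ i ∈ s, TotalD (F i) p := by
  classical
  induction s using Finset.induction_on with
  | empty => simpa using totalD_zero p
  | @insert a s ha ih =>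
    simp only [Finset.sum_insert ha]
    rw [totalD_add (h a (Finset.mem_insert_self a s))
      (Rep.sum fun i hi => h i (Finset.mem_insert_of_mem hi)) p,
      ih fun i hi => h i (Finset.mem_insert_of_mem hi)]

lemma Rep.pd {N : ℕ} {f : Jet → ℝ} (h : Rep N f) (i : ℕ) : Rep N (pd i f) := by
  obtain ⟨g, hg, he⟩ := h
  by_cases hi : i ≤ N
  · exact ⟨fun q => fderiv ℝ g q (euF ⟨i, by omega⟩),
      ContDiff.clm_apply (hg.fderiv_right (by exact_mod_cast le_top)) contDiff_const,
      fun p => pd_eq hg he ⟨i, by omega⟩ p⟩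
  · rw [pd_zero_of_gt he (by omega)]; exact rep_zero


lemma Bmap_euF {N i : ℕ} (hi : i ≤ N + 1) :
    Bmap N (euF (⟨i, by omega⟩ : Fin (N+2)))
      = if h1 : 1 ≤ i then euF (⟨i - 1, by omega⟩ : Fin (N+1)) else 0 := by
  rw [euF, Bmap_apply]
  split_ifs with h1
  · refine Prod.ext rfl ?_
    funext m
    simp only [euF, Pi.single_apply]
    by_cases hm : m.1 + 1 = i
    · rw [if_pos (Fin.ext hm), if_pos (Fin.ext (by simp; omega))]
    · rw [if_neg (fun he => hm (by simpa using congrArg Fin.val he)),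
        if_neg (fun he => hm (by have := congrArg Fin.val he; simp at this; omega))]
  · refine Prod.ext rfl ?_
    funext m
    simp only [Pi.single_apply]
    rw [if_neg (fun he => by have := congrArg Fin.val he; simp at this; omega)]
    rfl

lemma Amap_euF {N i : ℕ} (hi : i ≤ N + 1) :
    Amap N (euF (⟨i, by omega⟩ : Fin (N+2)))
      = if h1 : i ≤ N then euF (⟨i, by omega⟩ : Fin (N+1)) else 0 := by
  rw [euF, Amap_apply]
  split_ifs with h1
  · refine Prod.ext rfl ?_
    funext m
    simp only [euF, Pi.single_apply]
    by_cases hm : m.1 = i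
    · rw [if_pos (Fin.ext (by simpa using hm)), if_pos (Fin.ext hm)]
    · rw [if_neg (fun he => hm (by simpa using congrArg Fin.val he)),
        if_neg (fun he => hm (by simpa using congrArg Fin.val he))]
  · refine Prod.ext rfl ?_
    funext m
    simp only [Pi.single_apply]
    rw [if_neg (fun he => by have := congrArg Fin.val he; simp at this; omega)]
    rfl

lemma pd_totalD {N : ℕ} {f : Jet → ℝ} (h : Rep N f) (i : ℕ) (p : Jet) :
    pd i (TotalD f) p = TotalD (pd i f) p + (if 1 ≤ i then pd (i-1) f p else 0) := by
  obtain ⟨g, hg, he⟩ := h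
  have htop : ((⊤:ℕ∞) : WithTop ℕ∞) + 1 ≤ ((⊤:ℕ∞) : WithTop ℕ∞) := by exact_mod_cast le_top
  have hle : ((⊤:ℕ∞) : WithTop ℕ∞) ≠ 0 := by simp
  have hgd : Differentiable ℝ g := hg.differentiable hle
  have hg' : ContDiff ℝ (⊤:ℕ∞) (fderiv ℝ g) := hg.fderiv_right htop
  have hsymm : ∀ v w, fderiv ℝ (fderiv ℝ g) (proj N p) v w
      = fderiv ℝ (fderiv ℝ g) (proj N p) w v :=
    second_derivative_symmetric (fun y => (hgd y).hasFDerivAt)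
      ((hg'.differentiable hle (proj N p)).hasFDerivAt)
  by_cases hiN : i ≤ N + 1
  · -- main case
    have hpdT : pd i (TotalD f) p = fderiv ℝ (Gfun g) (proj (N+1) p) (euF ⟨i, by omega⟩) :=
      pd_eq (Gfun_smooth hg) (Gfun_rep hg he) ⟨i, by omega⟩ p
    have hc : DifferentiableAt ℝ (fun q => fderiv ℝ g (Amap N q)) (proj (N+1) p) :=
      ((hg'.comp (Amap N).contDiff).differentiable hle).differentiableAt
    have hu : DifferentiableAt ℝ
        (fun q : EN (N+1) => ((1:ℝ), (0 : Fin (N+1) → ℝ)) + Bmap N q) (proj (N+1) p) :=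
      (differentiableAt_const _).add (Bmap N).differentiableAt
    have hG : fderiv ℝ (Gfun g) (proj (N+1) p)
        = (fderiv ℝ g (Amap N (proj (N+1) p))).comp
            (fderiv ℝ (fun q : EN (N+1) => ((1:ℝ), (0 : Fin (N+1) → ℝ)) + Bmap N q) (proj (N+1) p))
          + (fderiv ℝ (fun q => fderiv ℝ g (Amap N q)) (proj (N+1) p)).flip
              (((1:ℝ), (0 : Fin (N+1) → ℝ)) + Bmap N (proj (N+1) p)) :=
      fderiv_clm_apply hc hu
    have hBu : fderiv ℝ (fun q : EN (N+1) => ((1:ℝ), (0 : Fin (N+1) → ℝ)) + Bmap N q) (proj (N+1) p)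
        = (Bmap N : EN (N+1) →L[ℝ] EN N) := by
      rw [fderiv_const_add]; exact (Bmap N).fderiv
    have hAc : fderiv ℝ (fun q => fderiv ℝ g (Amap N q)) (proj (N+1) p)
        = (fderiv ℝ (fderiv ℝ g) (Amap N (proj (N+1) p))).comp (Amap N) := by
      rw [show (fun q => fderiv ℝ g (Amap N q)) = (fderiv ℝ g) ∘ (Amap N) from rfl,
        fderiv_comp (proj (N+1) p) ((hg'.differentiable hle).differentiableAt)
          (Amap N).differentiableAt,
        (Amap N).fderiv]
    rw [hpdT, hG, hBu, hAc, Amap_proj, Bmap_proj]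
    simp only [ContinuousLinearMap.add_apply, ContinuousLinearMap.coe_comp',
      Function.comp_apply, ContinuousLinearMap.flip_apply]
    rw [Bmap_euF hiN, Amap_euF hiN]
    by_cases h1 : 1 ≤ i
    · rw [dif_pos h1]
      by_cases h2 : i ≤ N
      · rw [dif_pos h2]
        have hrep' : ∀ q, pd i f q = (fun y => fderiv ℝ g y (euF ⟨i, by omega⟩)) (proj N q) :=
          fun q => pd_eq hg he ⟨i, by omega⟩ q
        have hsm' : ContDiff ℝ (⊤:ℕ∞) (fun y => fderiv ℝ g y (euF (⟨i, by omega⟩ : Fin (N+1)))) :=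
          ContDiff.clm_apply hg' contDiff_const
        have hTpd : TotalD (pd i f) p
            = fderiv ℝ (fun y => fderiv ℝ g y (euF (⟨i, by omega⟩ : Fin (N+1)))) (proj N p)
                ((1:ℝ), fun j : Fin (N+1) => p.2 (j.1 + 1)) :=
          totalD_eq hsm' hrep' p
        have hflip : fderiv ℝ (fun y => fderiv ℝ g y (euF (⟨i, by omega⟩ : Fin (N+1)))) (proj N p)
            = (fderiv ℝ (fderiv ℝ g) (proj N p)).flip (euF ⟨i, by omega⟩) := by
          rw [fderiv_clm_apply ((hg'.differentiable hle).differentiableAt)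
            (differentiableAt_const _)]
          simp
        rw [hTpd, hflip]
        simp only [ContinuousLinearMap.flip_apply]
        rw [pd_eq hg he ⟨i - 1, by omega⟩ p, if_pos h1]
        rw [hsymm]
        ring
      · -- i = N + 1
        rw [dif_neg h2]
        have hz : pd i f = fun _ => 0 := pd_zero_of_gt he (by omega)
        rw [hz, totalD_zero, pd_eq hg he ⟨i - 1, by omega⟩ p, if_pos h1]
        simp
    · -- i = 0
      rw [dif_neg h1, dif_pos (by omega : i ≤ N)]
      have hrep' : ∀ q, pd i f q = (fun y => fderiv ℝ g y (euF ⟨i, by omega⟩)) (proj N q) :=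
        fun q => pd_eq hg he ⟨i, by omega⟩ q
      have hsm' : ContDiff ℝ (⊤:ℕ∞) (fun y => fderiv ℝ g y (euF (⟨i, by omega⟩ : Fin (N+1)))) :=
        ContDiff.clm_apply hg' contDiff_const
      have hTpd : TotalD (pd i f) p
          = fderiv ℝ (fun y => fderiv ℝ g y (euF (⟨i, by omega⟩ : Fin (N+1)))) (proj N p)
              ((1:ℝ), fun j : Fin (N+1) => p.2 (j.1 + 1)) :=
        totalD_eq hsm' hrep' p
      have hflip : fderiv ℝ (fun y => fderiv ℝ g y (euF (⟨i, by omega⟩ : Fin (N+1)))) (proj N p)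
          = (fderiv ℝ (fderiv ℝ g) (proj N p)).flip (euF ⟨i, by omega⟩) := by
        rw [fderiv_clm_apply ((hg'.differentiable hle).differentiableAt)
          (differentiableAt_const _)]
        simp
      rw [hTpd, hflip]
      simp only [ContinuousLinearMap.flip_apply]
      rw [if_neg h1, hsymm]
      simp
  · -- i > N + 1
    have h1 : pd i (TotalD f) = fun _ => 0 :=
      pd_zero_of_gt (Gfun_rep hg he) (by omega)
    have h2 : pd i f = fun _ => 0 := pd_zero_of_gt he (by omega)
    have h3 : pd (i-1) f = fun _ => 0 := pd_zero_of_gt he (by omega)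
    rw [congrFun h1 p, h2, h3, totalD_zero]
    simp


lemma pd_depends {n : ℕ} {lam : Jet → ℝ} (hdep : DependsOnJets n lam) {i : ℕ} (hi : n < i) :
    pd i lam = fun _ => 0 := by
  funext p
  unfold pd
  have h : (fun t => lam (p.1, Function.update p.2 i t)) = fun _ => lam p := by
    funext t
    refine hdep _ p (fun j hj => ?_)
    show Function.update p.2 i t j = p.2 j
    rw [Function.update_apply, if_neg (by omega)]
  rw [h]
  exact deriv_const _ _

lemma totalD_zero_fn : TotalD (fun _ => (0:ℝ)) = fun _ => 0 := funext totalD_zero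

lemma iter_totalD_zero (m : ℕ) : TotalD^[m] (fun _ => (0:ℝ)) = fun _ => 0 :=
  Function.iterate_fixed totalD_zero_fn m

lemma iter_lam0 (lam : Jet → ℝ) (m : ℕ) :
    TotalD^[m] (Lam lam 0) = fun p => (1/2) * TotalD^[m+1] lam p := by
  induction m with
  | zero =>
    funext p
    simp [Lam]
  | succ m ih =>
    funext p
    rw [Function.iterate_succ_apply', ih, totalD_const_mul,
      ← Function.iterate_succ_apply' TotalD (m+1)]

lemma inner_reduce (lam : Jet → ℝ) (k i : ℕ) (c : ℝ) (p : Jet) :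
    (∑ r ∈ Finset.range (i+1), if r ≤ k then
        (Nat.choose i r : ℝ) * (TotalD^[i - r] (Lam lam (k - r)) p) * c else 0)
    = ((Nat.choose i k : ℝ) * (TotalD^[i-k] (Lam lam 0) p)
        + (if 1 ≤ k then (Nat.choose i (k-1) : ℝ) else 0) * TotalD^[i+1-k] lam p) * c := by
  have hsplit : ∀ r ∈ Finset.range (i+1),
      (if r ≤ k then (Nat.choose i r : ℝ) * (TotalD^[i - r] (Lam lam (k - r)) p) * c else 0)
      = (if r = k then (Nat.choose i k : ℝ) * (TotalD^[i-k] (Lam lam 0) p) * c else 0)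
        + (if r + 1 = k then (Nat.choose i r : ℝ) * (TotalD^[i-r] lam p) * c else 0) := by
    intro r _
    by_cases h1 : r = k
    · subst h1
      rw [if_pos le_rfl, if_pos rfl, if_neg (by omega), Nat.sub_self, add_zero]
    · by_cases h2 : r + 1 = k
      · have h3 : k - r = 1 := by omega
        rw [if_pos (by omega : r ≤ k), if_neg h1, if_pos h2, h3, zero_add]
        rfl
      · rw [if_neg h1, if_neg h2, add_zero]
        by_cases h3 : r ≤ k
        · have h4 : k - r = (k - r - 2) + 2 := by omega
          rw [if_pos h3, h4, show Lam lam (k-r-2+2) = fun _ => (0:ℝ) from rfl,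
            iter_totalD_zero]
          simp
        · rw [if_neg h3]
  rw [Finset.sum_congr rfl hsplit, Finset.sum_add_distrib]
  have hfirst : (∑ r ∈ Finset.range (i+1),
      if r = k then (Nat.choose i k : ℝ) * (TotalD^[i-k] (Lam lam 0) p) * c else 0)
      = (Nat.choose i k : ℝ) * (TotalD^[i-k] (Lam lam 0) p) * c := by
    rw [Finset.sum_ite_eq' (Finset.range (i+1)) k
      (fun _ => (Nat.choose i k : ℝ) * (TotalD^[i-k] (Lam lam 0) p) * c)]
    by_cases h : k ≤ i
    · rw [if_pos (Finset.mem_range.mpr (by omega))]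
    · rw [if_neg (by simp; omega), Nat.choose_eq_zero_of_lt (by omega)]
      simp
  have hsecond : (∑ r ∈ Finset.range (i+1),
      if r + 1 = k then (Nat.choose i r : ℝ) * (TotalD^[i-r] lam p) * c else 0)
      = (if 1 ≤ k then (Nat.choose i (k-1) : ℝ) else 0) * TotalD^[i+1-k] lam p * c := by
    cases k with
    | zero => simp
    | succ m =>
      have hcong : ∀ r ∈ Finset.range (i+1),
          (if r + 1 = m + 1 then (Nat.choose i r : ℝ) * (TotalD^[i-r] lam p) * c else 0)
          = (if r = m then (Nat.choose i r : ℝ) * (TotalD^[i-r] lam p) * c else 0) := by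
        intro r _
        by_cases h : r = m
        · rw [if_pos (by omega), if_pos h]
        · rw [if_neg (by omega), if_neg h]
      rw [Finset.sum_congr rfl hcong,
        Finset.sum_ite_eq' (Finset.range (i+1)) m
          (fun r => (Nat.choose i r : ℝ) * (TotalD^[i-r] lam p) * c)]
      have he : i + 1 - (m+1) = i - m := by omega
      have hm : m + 1 - 1 = m := by omega
      rw [if_pos (by omega : (1:ℕ) ≤ m+1), he, hm]
      by_cases h : m ≤ i
      · rw [if_pos (Finset.mem_range.mpr (by omega))]
      · rw [if_neg (by simp; omega), Nat.choose_eq_zero_of_lt (by omega)]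
        simp
  rw [hfirst, hsecond]
  ring

/-- The coefficient function appearing in the reduced form of `R_{k,l}`. -/
def Efun (lam : Jet → ℝ) (k i : ℕ) : Jet → ℝ :=
  fun p => (Nat.choose i k : ℝ) * ((1/2) * TotalD^[i-k+1] lam p)
    + (if 1 ≤ k then (Nat.choose i (k-1) : ℝ) else 0) * TotalD^[i+1-k] lam p

lemma Rcoef_reduce (n : ℕ) (lam : Jet → ℝ) (k l : ℕ) (p : Jet) :
    Rcoef n lam k l p
      = ∑ i ∈ Finset.range (n+2), Efun lam k i p * pd i (Lam lam l) p := by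
  unfold Rcoef
  refine Finset.sum_congr rfl fun i _ => ?_
  rw [inner_reduce lam k i (pd i (Lam lam l) p) p, iter_lam0 lam (i-k)]
  rfl


lemma key (T : ℕ → ℝ) (k i : ℕ) :
    (((i+1).choose k : ℝ) * ((1/2) * T (i+1-k+1))
      + (if 1 ≤ k then ((i+1).choose (k-1) : ℝ) else 0) * T (i+1+1-k))
    = ((i.choose k : ℝ) * ((1/2) * T (i-k+1+1))
        + (if 1 ≤ k then (i.choose (k-1) : ℝ) else 0) * T (i+1-k+1))
      + (if 1 ≤ k then
          ((i.choose (k-1) : ℝ) * ((1/2) * T (i-(k-1)+1))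
            + (if 1 ≤ k-1 then (i.choose (k-1-1) : ℝ) else 0) * T (i+1-(k-1)))
        else 0) := by
  by_cases hk0 : k = 0
  · subst hk0
    simp
  have hk1 : 1 ≤ k := by omega
  rw [if_pos hk1, if_pos hk1, if_pos hk1]
  have pascal1 : ((i+1).choose k : ℝ) = i.choose (k-1) + i.choose k := by
    cases k with
    | zero => omega
    | succ m =>
      have h := Nat.choose_succ_succ i m
      simp only [Nat.succ_sub_one]
      push_cast [h]
      ring
  by_cases hki : k ≤ i
  · -- all exponents equal i+2-k
    simp only [show i+1-k+1 = i+2-k from by omega, show i+1+1-k = i+2-k from by omega,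
      show i-k+1+1 = i+2-k from by omega, show i-(k-1)+1 = i+2-k from by omega,
      show i+1-(k-1) = i+2-k from by omega]
    rw [pascal1]
    by_cases hk2 : 2 ≤ k
    · obtain ⟨m, rfl⟩ : ∃ m, k = m + 2 := ⟨k-2, by omega⟩
      simp only [show m+2-1 = m+1 from rfl, show m+2-1-1 = m from rfl,
        show m+1-1 = m from rfl]
      rw [if_pos (by omega : (1:ℕ) ≤ m+1)]
      have pascal2 : ((i+1).choose (m+1) : ℝ) = i.choose m + i.choose (m+1) := by
        push_cast [Nat.choose_succ_succ i m]
        ring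
      rw [pascal2]
      ring
    · obtain rfl : k = 1 := by omega
      simp only [show (1:ℕ)-1 = 0 from rfl]
      rw [if_neg (by omega)]
      simp only [Nat.choose_zero_right]
      push_cast
      ring
  · by_cases hki1 : k = i + 1
    · subst hki1
      simp only [show i+1-(i+1)+1 = 1 from by omega, show i+1+1-(i+1) = 1 from by omega,
        show i+1-1 = i from rfl, show i-i+1 = 1 from by omega, show i+1-i = 1 from by omega,
        show i-(i+1)+1+1 = 2 from by omega,
        Nat.choose_self, Nat.choose_eq_zero_of_lt (by omega : i < i + 1),
        Nat.choose_succ_self_right]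
      by_cases hi0 : i = 0
      · subst hi0
        norm_num
        ring
      · rw [if_pos (by omega : 1 ≤ i)]
        have hcs : i.choose (i-1) = i := by
          have h2 := Nat.choose_succ_self_right (i-1)
          rwa [show i-1+1 = i from by omega] at h2
        rw [hcs]
        push_cast
        ring
    · by_cases hki2 : k = i + 2
      · subst hki2
        simp only [show i+2-1 = i+1 from rfl, show i+1-1 = i from rfl,
          show i+1+1-(i+2) = 0 from by omega, show i+1-(i+1) = 0 from by omega,
          Nat.choose_self, Nat.choose_eq_zero_of_lt (by omega : i + 1 < i + 2),
          Nat.choose_eq_zero_of_lt (by omega : i < i + 2),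
          Nat.choose_eq_zero_of_lt (by omega : i < i + 1),
          if_pos (by omega : (1:ℕ) ≤ i + 1)]
        push_cast
        ring
      · -- k ≥ i + 3
        rw [Nat.choose_eq_zero_of_lt (by omega : i + 1 < k),
          Nat.choose_eq_zero_of_lt (by omega : i + 1 < k - 1),
          Nat.choose_eq_zero_of_lt (by omega : i < k),
          Nat.choose_eq_zero_of_lt (by omega : i < k - 1)]
        have hz : (i.choose (k-1-1) : ℝ) = 0 := by
          rw [Nat.choose_eq_zero_of_lt (by omega : i < k - 1 - 1)]
          simp
        rw [hz]
        push_cast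
        simp


lemma totalD_const_mul_iter (c : ℝ) (lam : Jet → ℝ) (m : ℕ) (p : Jet) :
    TotalD (fun q => c * TotalD^[m] lam q) p = c * TotalD^[m+1] lam p := by
  rw [totalD_const_mul c (TotalD^[m] lam) p, ← Function.iterate_succ_apply' TotalD m lam]

lemma totalD_cc (c d : ℝ) (lam : Jet → ℝ) (m : ℕ) (p : Jet) :
    TotalD (fun q => c * (d * TotalD^[m] lam q)) p = c * (d * TotalD^[m+1] lam p) := by
  have h1 := totalD_const_mul c (fun q => d * TotalD^[m] lam q) p
  rw [totalD_const_mul_iter d lam m p] at h1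
  exact h1

lemma totalD_Efun {N : ℕ} {lam : Jet → ℝ} {k i : ℕ}
    (hTa : Rep N (TotalD^[i-k+1] lam)) (hTb : Rep N (TotalD^[i+1-k] lam)) (p : Jet) :
    TotalD (Efun lam k i) p
      = (i.choose k : ℝ) * ((1/2) * TotalD^[i-k+1+1] lam p)
        + (if 1 ≤ k then (i.choose (k-1) : ℝ) else 0) * TotalD^[i+1-k+1] lam p := by
  have h := totalD_add
    (f₁ := fun q => (i.choose k : ℝ) * ((1/2) * TotalD^[i-k+1] lam q))
    (f₂ := fun q => (if 1 ≤ k then (i.choose (k-1) : ℝ) else 0) * TotalD^[i+1-k] lam q)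
    (Rep.const_mul _ (Rep.const_mul _ hTa)) (Rep.const_mul _ hTb) p
  rw [totalD_cc, totalD_const_mul_iter] at h
  exact h

end Rk0

theorem R_k0_relation (n : ℕ) (lam : Jet → ℝ)
    (hs : SmoothFin lam) (hdep : DependsOnJets n lam) :
    (∀ k : ℕ, ∀ p : Jet,
        Rcoef n lam k 1 p
          = (1 / 2) * ∑ i ∈ Finset.range (n + 1),
              ((Nat.choose i k : ℝ) + 2 * (if 1 ≤ k then (Nat.choose i (k - 1) : ℝ) else 0)) *
                TotalD^[i + 1 - k] lam p * pd i lam p) ∧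
      (∀ k : ℕ, k ≤ n + 2 → ∀ p : Jet,
        Rcoef n lam k 0 p
          = (1 / 2) * (TotalD (Rcoef n lam k 1) p +
              (if 1 ≤ k then Rcoef n lam (k - 1) 1 p else 0))) := by
  classical
  obtain ⟨N0, g0, hg0, he0⟩ := hs
  have hRep : Rk0.Rep N0 lam := ⟨g0, hg0.of_le (by simp), fun p => he0 p⟩
  have hT : ∀ m : ℕ, Rk0.Rep (N0 + m) (TotalD^[m] lam) := by
    intro m
    induction m with
    | zero => exact hRep
    | succ m ih =>
      have h := ih.totalD
      rwa [← Function.iterate_succ_apply' TotalD m lam] at h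
  have hTK : ∀ m : ℕ, m ≤ n + 4 → Rk0.Rep (N0 + n + 4) (TotalD^[m] lam) :=
    fun m hm => (hT m).mono (by omega)
  have hPdep : ∀ i : ℕ, n < i → pd i lam = fun _ => 0 := fun i hi => Rk0.pd_depends hdep hi
  have hEfunRep : ∀ k i : ℕ, i ≤ n + 1 → Rk0.Rep (N0+n+4) (Rk0.Efun lam k i) := by
    intro k i hi
    exact Rk0.Rep.add
      (Rk0.Rep.const_mul _ (Rk0.Rep.const_mul _ (hTK (i-k+1) (by omega))))
      (Rk0.Rep.const_mul _ (hTK (i+1-k) (by omega)))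
  have hR1 : ∀ k p, Rcoef n lam k 1 p
      = ∑ i ∈ Finset.range (n+1), Rk0.Efun lam k i p * pd i lam p := by
    intro k p
    rw [Rk0.Rcoef_reduce n lam k 1 p]
    simp only [show Lam lam 1 = lam from rfl]
    rw [Finset.sum_range_succ, hPdep (n+1) (by omega)]
    simp
  have part1 : ∀ k : ℕ, ∀ p : Jet,
      Rcoef n lam k 1 p
        = (1 / 2) * ∑ i ∈ Finset.range (n + 1),
            ((Nat.choose i k : ℝ) + 2 * (if 1 ≤ k then (Nat.choose i (k - 1) : ℝ) else 0)) *
              TotalD^[i + 1 - k] lam p * pd i lam p := by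
    intro k p
    rw [hR1 k p, Finset.mul_sum]
    refine Finset.sum_congr rfl fun i _ => ?_
    show Rk0.Efun lam k i p * pd i lam p = _
    unfold Rk0.Efun
    by_cases h : k ≤ i
    · rw [show i-k+1 = i+1-k from by omega]
      ring
    · rw [Nat.choose_eq_zero_of_lt (by omega : i < k)]
      push_cast
      ring
  refine ⟨part1, ?_⟩
  intro k _ p
  have hpdL0 : ∀ i : ℕ, pd i (Lam lam 0) p
      = (1/2) * (TotalD (pd i lam) p + (if 1 ≤ i then pd (i-1) lam p else 0)) :=
    fun i =>
      (Rk0.pd_const_mul (1/2) (TotalD lam) i p).trans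
        (by rw [Rk0.pd_totalD hRep i p])
  have hQtop : TotalD (pd (n+1) lam) p = 0 := by
    rw [hPdep (n+1) (by omega)]
    exact Rk0.totalD_zero p
  have hL2 : Rcoef n lam k 0 p
      = (1/2) * (∑ i ∈ Finset.range (n+1), Rk0.Efun lam k i p * TotalD (pd i lam) p)
        + (1/2) * (∑ i ∈ Finset.range (n+1), Rk0.Efun lam k (i+1) p * pd i lam p) := by
    rw [Rk0.Rcoef_reduce n lam k 0 p,
      Finset.sum_congr rfl (fun i (_ : i ∈ Finset.range (n+2)) => by rw [hpdL0 i])]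
    rw [Finset.sum_congr rfl (fun i (_ : i ∈ Finset.range (n+2)) =>
      show Rk0.Efun lam k i p
            * ((1/2) * (TotalD (pd i lam) p + (if 1 ≤ i then pd (i-1) lam p else 0)))
          = (1/2) * (Rk0.Efun lam k i p * TotalD (pd i lam) p)
            + (1/2) * (Rk0.Efun lam k i p * (if 1 ≤ i then pd (i-1) lam p else 0)) from by ring),
      Finset.sum_add_distrib]
    congr 1
    · rw [Finset.sum_range_succ, hQtop, Finset.mul_sum]
      simp
    · rw [Finset.sum_range_succ'
        (fun i => (1/2) * (Rk0.Efun lam k i p * (if 1 ≤ i then pd (i-1) lam p else 0))) (n+1)]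
      rw [show (1/2) * (Rk0.Efun lam k 0 p * (if 1 ≤ 0 then pd (0-1) lam p else 0)) = 0 from by simp,
        add_zero, Finset.mul_sum]
      refine Finset.sum_congr rfl fun i _ => ?_
      rw [if_pos (by omega : 1 ≤ i + 1), show i+1-1 = i from rfl]
  have hDR : TotalD (Rcoef n lam k 1) p
      = ∑ i ∈ Finset.range (n+1),
          (TotalD (Rk0.Efun lam k i) p * pd i lam p
            + Rk0.Efun lam k i p * TotalD (pd i lam) p) := by
    rw [show Rcoef n lam k 1
        = fun q => ∑ i ∈ Finset.range (n+1), Rk0.Efun lam k i q * pd i lam q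
      from funext (hR1 k)]
    refine (Rk0.totalD_sum (N := N0+n+4)
      (F := fun i q => Rk0.Efun lam k i q * pd i lam q) (fun i hi => ?_) p).trans ?_
    · exact (hEfunRep k i (by have := Finset.mem_range.mp hi; omega)).mul
        ((hRep.pd i).mono (by omega))
    · refine Finset.sum_congr rfl fun i hi => ?_
      exact Rk0.totalD_mul (hEfunRep k i (by have := Finset.mem_range.mp hi; omega))
        ((hRep.pd i).mono (by omega)) p
  have hTE : ∀ i : ℕ, i ≤ n → TotalD (Rk0.Efun lam k i) p
      = (i.choose k : ℝ) * ((1/2) * TotalD^[i-k+1+1] lam p)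
        + (if 1 ≤ k then (i.choose (k-1) : ℝ) else 0) * TotalD^[i+1-k+1] lam p :=
    fun i hi => Rk0.totalD_Efun (hTK (i-k+1) (by omega)) (hTK (i+1-k) (by omega)) p
  have h3 : ∀ i : ℕ, i ≤ n → Rk0.Efun lam k (i+1) p
      = TotalD (Rk0.Efun lam k i) p + (if 1 ≤ k then Rk0.Efun lam (k-1) i p else 0) := by
    intro i hi
    rw [hTE i hi]
    exact Rk0.key (fun m => TotalD^[m] lam p) k i
  rw [hL2, hDR, hR1 (k-1) p, Finset.sum_add_distrib]
  rw [show (if 1 ≤ k then ∑ i ∈ Finset.range (n+1), Rk0.Efun lam (k-1) i p * pd i lam p else 0)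
      = ∑ i ∈ Finset.range (n+1), (if 1 ≤ k then Rk0.Efun lam (k-1) i p else 0) * pd i lam p
    from by split_ifs with h <;> simp]
  have hcomb : (∑ i ∈ Finset.range (n+1), Rk0.Efun lam k (i+1) p * pd i lam p)
      = (∑ i ∈ Finset.range (n+1), TotalD (Rk0.Efun lam k i) p * pd i lam p)
        + ∑ i ∈ Finset.range (n+1), (if 1 ≤ k then Rk0.Efun lam (k-1) i p else 0) * pd i lam p := by
    rw [← Finset.sum_add_distrib]
    refine Finset.sum_congr rfl fun i hi => ?_
    rw [h3 i (by have := Finset.mem_range.mp hi; omega)]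
    ring
  rw [hcomb]
  ring


end
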